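/- arXiv:2001.02345 — 2 statements merged into one kernel-verified Lean document; each statement's English description precedes it below -/
import Mathlib

section
/- Let H ∈ M_n(M_k) be a positive semidefinite block matrix with blocks H_{ij} ∈ M_k. Then (det(tr_1 H) / n^k)^n ≥ det H, where tr_1 H = Σ_{i=1}^n H_{ii} ∈ M_k is the first partial trace. -/
open ComplexOrder

open Matrix

open scoped MatrixOrder


variable {m : Type*} [Fintype m] [DecidableEq m]

lemma psd_det_eq {A : Matrix m m ℂ} (hA : A.PosSemidef) :
    A.det = ((A.det.re : ℝ) : ℂ) := by
  have h2 : A.det = ((∏ i, hA.1.eigenvalues i : ℝ) : ℂ) := by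
    rw [hA.1.det_eq_prod_eigenvalues]; push_cast; rfl
  rw [h2, Complex.ofReal_re]

lemma psd_det_re_nonneg {A : Matrix m m ℂ} (hA : A.PosSemidef) : 0 ≤ A.det.re := by
  have h2 : A.det = ((∏ i, hA.1.eigenvalues i : ℝ) : ℂ) := by
    rw [hA.1.det_eq_prod_eigenvalues]; push_cast; rfl
  have hnn : 0 ≤ ∏ i, hA.1.eigenvalues i :=
    Finset.prod_nonneg fun i _ => hA.eigenvalues_nonneg i
  rw [h2, Complex.ofReal_re]; exact hnn

lemma psd_posdef_of_det_ne {A : Matrix m m ℂ} (hA : A.PosSemidef) (h : A.det ≠ 0) :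
    A.PosDef := by
  refine Matrix.PosDef.of_dotProduct_mulVec_pos hA.1 fun x hx => ?_
  have hu : IsUnit A := (Matrix.isUnit_iff_isUnit_det A).2 h.isUnit
  have hAx : A *ᵥ x ≠ 0 := by
    intro h0
    apply hx
    have := congrArg (fun v => A⁻¹ *ᵥ v) h0
    simpa [mulVec_mulVec, Matrix.nonsing_inv_mul A h.isUnit] using this
  have h0 := hA.dotProduct_mulVec_nonneg x
  rcases h0.lt_or_eq with h'|h'
  · exact h'
  · exact absurd ((hA.dotProduct_mulVec_zero_iff x).1 h'.symm) hAx

lemma det_one_add_psd {M : Matrix m m ℂ} (hM : M.PosSemidef) :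
    (1 + M).det = ((∏ i, (1 + hM.1.eigenvalues i) : ℝ) : ℂ) := by
  set U : Matrix m m ℂ := (hM.1.eigenvectorUnitary : Matrix m m ℂ)
  have hU : U * star U = 1 := (Matrix.mem_unitaryGroup_iff).mp hM.1.eigenvectorUnitary.2
  set D : Matrix m m ℂ := diagonal (RCLike.ofReal ∘ hM.1.eigenvalues)
  have hspec : M = U * D * star U := hM.1.spectral_theorem
  have h1 : 1 + M = U * (1 + D) * star U := by
    rw [Matrix.mul_add, Matrix.add_mul, Matrix.mul_one, hU, hspec]
  rw [h1, Matrix.det_mul_right_comm, hU, Matrix.one_mul]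
  have : (1 : Matrix m m ℂ) + D = diagonal (fun i => ((1 + hM.1.eigenvalues i : ℝ) : ℂ)) := by
    rw [← Matrix.diagonal_one, Matrix.diagonal_add]
    congr 1
    ext i
    push_cast
    rfl
  rw [this, Matrix.det_diagonal]
  push_cast
  rfl

lemma det_re_add_psd_le {A P : Matrix m m ℂ} (hA : A.PosSemidef) (hP : P.PosSemidef) :
    A.det.re ≤ (A + P).det.re := by
  by_cases hd : A.det = 0
  · rw [hd]
    simpa using psd_det_re_nonneg (hA.add hP)
  · have hApd : A.PosDef := psd_posdef_of_det_ne hA hd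
    set R := CFC.sqrt A with hRdef
    have hR2 : R * R = A := by
      have := CFC.sq_sqrt A hA.nonneg
      rwa [pow_two] at this
    have hRh : R.IsHermitian := (CFC.sqrt_nonneg A).posSemidef.1
    have hRdet : R.det ≠ 0 := by
      intro h0
      apply hd
      rw [← hR2, Matrix.det_mul, h0, mul_zero]
    have hRi : R * R⁻¹ = 1 := Matrix.mul_nonsing_inv R hRdet.isUnit
    have hRi' : R⁻¹ * R = 1 := Matrix.nonsing_inv_mul R hRdet.isUnit
    set M := R⁻¹ * P * R⁻¹ with hMdef
    have hMpsd : M.PosSemidef := by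
      have := hP.conjTranspose_mul_mul_same (B := R⁻¹)
      rwa [Matrix.conjTranspose_nonsing_inv, hRh.eq] at this
    have hAP : A + P = R * (1 + M) * R := by
      have key : R * (R⁻¹ * P * R⁻¹) * R = P := by
        calc R * (R⁻¹ * P * R⁻¹) * R = (R * R⁻¹) * P * (R⁻¹ * R) := by
              simp only [Matrix.mul_assoc]
          _ = P := by rw [hRi, hRi', Matrix.one_mul, Matrix.mul_one]
      rw [Matrix.mul_add, Matrix.add_mul, Matrix.mul_one, hR2, hMdef, key]
    have hb := det_one_add_psd hMpsd
    have hb1 : (1 : ℝ) ≤ ∏ i, (1 + hMpsd.1.eigenvalues i) := by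
      have := Finset.prod_le_prod (s := Finset.univ) (f := fun _ : m => (1:ℝ))
        (g := fun i => 1 + hMpsd.1.eigenvalues i) (fun i _ => zero_le_one)
        (fun i _ => by have := hMpsd.eigenvalues_nonneg i; linarith)
      simpa using this
    have hdetAP : (A + P).det = A.det * (1 + M).det := by
      rw [hAP, Matrix.det_mul, Matrix.det_mul, ← hR2, Matrix.det_mul]
      ring
    have ha := psd_det_eq hA
    have ha0 := psd_det_re_nonneg hA
    calc A.det.re = A.det.re * 1 := (mul_one _).symm
      _ ≤ A.det.re * ∏ i, (1 + hMpsd.1.eigenvalues i) :=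
          mul_le_mul_of_nonneg_left hb1 ha0
      _ = (A + P).det.re := by
          rw [hdetAP, hb]
          conv_rhs => rw [ha]
          rw [← Complex.ofReal_mul, Complex.ofReal_re]

/-- Scalar Mahler / superadditivity of geometric mean against ones. -/
lemma mahler_scalar {ι : Type*} [Fintype ι] [Nonempty ι] (μ : ι → ℝ) (hμ : ∀ i, 0 ≤ μ i) :
    1 + (∏ i, μ i) ^ ((Fintype.card ι : ℝ)⁻¹) ≤ (∏ i, (1 + μ i)) ^ ((Fintype.card ι : ℝ)⁻¹) := by
  set c : ℝ := (Fintype.card ι : ℝ) with hc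
  have hcpos : (0:ℝ) < c := by
    simp [hc, Fintype.card_pos]
  have h1μ : ∀ i, (0:ℝ) < 1 + μ i := fun i => by have := hμ i; linarith
  set P : ℝ := ∏ i, (1 + μ i) with hP
  have hPpos : 0 < P := Finset.prod_pos fun i _ => h1μ i
  have hw : ∑ _i : ι, c⁻¹ = 1 := by
    rw [Finset.sum_const, Finset.card_univ, nsmul_eq_mul]
    exact mul_inv_cancel₀ hcpos.ne'
  have g1 := Real.geom_mean_le_arith_mean_weighted Finset.univ (fun _ => c⁻¹)
    (fun i => 1 / (1 + μ i)) (fun i _ => by positivity) hw (fun i _ => by have := h1μ i; positivity)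
  have g2 := Real.geom_mean_le_arith_mean_weighted Finset.univ (fun _ => c⁻¹)
    (fun i => μ i / (1 + μ i)) (fun i _ => by positivity) hw
    (fun i _ => by have := hμ i; have := h1μ i; positivity)
  have e1 : (∏ i, (1 / (1 + μ i)) ^ c⁻¹) = (1/P) ^ c⁻¹ := by
    rw [Real.finset_prod_rpow _ _ (fun i _ => by have := h1μ i; positivity)]
    congr 1
    simp [hP, one_div, ← Finset.prod_inv_distrib]
  have e2 : (∏ i, (μ i / (1 + μ i)) ^ c⁻¹) = ((∏ i, μ i) / P) ^ c⁻¹ := by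
    rw [Real.finset_prod_rpow _ _ (fun i _ => by have := hμ i; have := h1μ i; positivity)]
    congr 1
    rw [hP, Finset.prod_div_distrib]
  have hsum : (∑ _i : ι, c⁻¹ * (1 / (1 + μ _i))) + (∑ i : ι, c⁻¹ * (μ i / (1 + μ i))) = 1 := by
    rw [← Finset.sum_add_distrib]
    rw [← hw]
    refine Finset.sum_congr rfl fun i _ => ?_
    have h1 := h1μ i
    rw [hw, ← mul_add, ← add_div, div_self h1.ne', mul_one]
  rw [e1] at g1; rw [e2] at g2
  have key : (1/P) ^ c⁻¹ + ((∏ i, μ i) / P) ^ c⁻¹ ≤ 1 := by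
    calc _ ≤ _ + _ := add_le_add g1 g2
      _ = 1 := hsum
  have hPr : (0:ℝ) < P ^ c⁻¹ := Real.rpow_pos_of_pos hPpos _
  have hprodμ : 0 ≤ ∏ i, μ i := Finset.prod_nonneg fun i _ => hμ i
  rw [Real.div_rpow (by norm_num) hPpos.le, Real.div_rpow hprodμ hPpos.le,
    Real.one_rpow] at key
  rw [← add_div, div_le_one hPr] at key
  linarith

lemma posdef_decomp {A B : Matrix m m ℂ} (hApd : A.PosDef) (hB : B.PosSemidef) :
    ∃ μ : m → ℝ, (∀ i, 0 ≤ μ i) ∧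
      (A + B).det.re = A.det.re * ∏ i, (1 + μ i) ∧
      B.det.re = A.det.re * ∏ i, μ i := by
  have hA : A.PosSemidef := hApd.posSemidef
  have hd : A.det ≠ 0 := hApd.det_pos.ne'
  set R := CFC.sqrt A with hRdef
  have hR2 : R * R = A := by
    have := CFC.sq_sqrt A hA.nonneg
    rwa [pow_two] at this
  have hRh : R.IsHermitian := (CFC.sqrt_nonneg A).posSemidef.1
  have hRdet : R.det ≠ 0 := by
    intro h0; apply hd; rw [← hR2, Matrix.det_mul, h0, mul_zero]
  have hRi : R * R⁻¹ = 1 := Matrix.mul_nonsing_inv R hRdet.isUnit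
  have hRi' : R⁻¹ * R = 1 := Matrix.nonsing_inv_mul R hRdet.isUnit
  set M := R⁻¹ * B * R⁻¹ with hMdef
  have hMpsd : M.PosSemidef := by
    have := hB.conjTranspose_mul_mul_same (B := R⁻¹)
    rwa [Matrix.conjTranspose_nonsing_inv, hRh.eq] at this
  have key : R * (R⁻¹ * B * R⁻¹) * R = B := by
    calc R * (R⁻¹ * B * R⁻¹) * R = (R * R⁻¹) * B * (R⁻¹ * R) := by
          simp only [Matrix.mul_assoc]
      _ = B := by rw [hRi, hRi', Matrix.one_mul, Matrix.mul_one]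
  refine ⟨hMpsd.1.eigenvalues, fun i => hMpsd.eigenvalues_nonneg i, ?_, ?_⟩
  · have hAP : A + B = R * (1 + M) * R := by
      rw [Matrix.mul_add, Matrix.add_mul, Matrix.mul_one, hR2, hMdef, key]
    have hdetAP : (A + B).det = A.det * (1 + M).det := by
      rw [hAP, Matrix.det_mul, Matrix.det_mul, ← hR2, Matrix.det_mul]; ring
    rw [hdetAP, det_one_add_psd hMpsd]
    conv_lhs => rw [psd_det_eq hA]
    rw [← Complex.ofReal_mul, Complex.ofReal_re]
  · have hdetB : B.det = A.det * M.det := by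
      have h1 : M.det = R⁻¹.det * B.det * R⁻¹.det := by
        rw [hMdef, Matrix.det_mul, Matrix.det_mul]
      have h2 : R⁻¹.det = R.det⁻¹ := by
        rw [Matrix.det_nonsing_inv, Ring.inverse_eq_inv']
      have h3 : A.det = R.det * R.det := by rw [← hR2, Matrix.det_mul]
      rw [h1, h2, h3]
      field_simp
    have hM : M.det = ((∏ i, hMpsd.1.eigenvalues i : ℝ) : ℂ) := by
      rw [hMpsd.1.det_eq_prod_eigenvalues]; push_cast; rfl
    rw [hdetB, hM]
    conv_lhs => rw [psd_det_eq hA]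
    rw [← Complex.ofReal_mul, Complex.ofReal_re]

lemma minkowski_two [Nonempty m] {A B : Matrix m m ℂ}
    (hA : A.PosSemidef) (hB : B.PosSemidef) :
    A.det.re ^ ((Fintype.card m : ℝ)⁻¹) + B.det.re ^ ((Fintype.card m : ℝ)⁻¹)
      ≤ (A + B).det.re ^ ((Fintype.card m : ℝ)⁻¹) := by
  set c : ℝ := (Fintype.card m : ℝ) with hc
  have hcpos : (0:ℝ) < c := by simp [hc, Fintype.card_pos]
  by_cases hdA : A.det = 0
  · have : A.det.re = 0 := by rw [hdA]; rfl
    rw [this, Real.zero_rpow (by positivity), zero_add]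
    refine Real.rpow_le_rpow (psd_det_re_nonneg hB) ?_ (by positivity)
    rw [add_comm]
    exact det_re_add_psd_le hB hA
  by_cases hdB : B.det = 0
  · have : B.det.re = 0 := by rw [hdB]; rfl
    rw [this, Real.zero_rpow (by positivity), add_zero]
    exact Real.rpow_le_rpow (psd_det_re_nonneg hA) (det_re_add_psd_le hA hB) (by positivity)
  · have hApd := psd_posdef_of_det_ne hA hdA
    obtain ⟨μ, hμ0, hAB, hBeq⟩ := posdef_decomp hApd hB
    have ha0 : 0 < A.det.re := by
      rcases (psd_det_re_nonneg hA).lt_or_eq with h|h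
      · exact h
      · exfalso; apply hdA; rw [psd_det_eq hA, ← h]; simp
    have hmah := mahler_scalar μ hμ0
    have hprodμ : 0 ≤ ∏ i, μ i := Finset.prod_nonneg fun i _ => hμ0 i
    rw [hAB, hBeq]
    rw [Real.mul_rpow ha0.le hprodμ, Real.mul_rpow ha0.le
      (Finset.prod_nonneg fun i _ => by have := hμ0 i; linarith)]
    have har : 0 < A.det.re ^ c⁻¹ := Real.rpow_pos_of_pos ha0 _
    nlinarith [mul_le_mul_of_nonneg_left hmah har.le]

lemma psd_sum {ι : Type*} (s : Finset ι) (f : ι → Matrix m m ℂ)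
    (hf : ∀ i ∈ s, (f i).PosSemidef) : (∑ i ∈ s, f i).PosSemidef := by
  induction s using Finset.cons_induction with
  | empty => simpa using Matrix.PosSemidef.zero
  | cons a s ha ih =>
    rw [Finset.sum_cons]
    exact (hf a (Finset.mem_cons_self a s)).add
      (ih fun i hi => hf i (Finset.mem_cons_of_mem hi))

lemma minkowski_sum [Nonempty m] {ι : Type*} (s : Finset ι) (f : ι → Matrix m m ℂ)
    (hf : ∀ i ∈ s, (f i).PosSemidef) :
    ∑ i ∈ s, (f i).det.re ^ ((Fintype.card m : ℝ)⁻¹)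
      ≤ (∑ i ∈ s, f i).det.re ^ ((Fintype.card m : ℝ)⁻¹) := by
  induction s using Finset.cons_induction with
  | empty =>
    have h0 : ((0 : Matrix m m ℂ)).det = 0 := Matrix.det_zero
    have hcne : ((Fintype.card m : ℝ)⁻¹) ≠ 0 := by
      have := Fintype.card_pos (α := m); positivity
    simp [h0, Real.zero_rpow hcne]
  | cons a s ha ih =>
    rw [Finset.sum_cons, Finset.sum_cons]
    have h1 := ih fun i hi => hf i (Finset.mem_cons_of_mem hi)
    have h2 := minkowski_two (hf a (Finset.mem_cons_self a s))
      (psd_sum s f fun i hi => hf i (Finset.mem_cons_of_mem hi))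
    linarith

lemma amgm_sum {ι : Type*} [Fintype ι] (x : ι → ℝ) (hx : ∀ i, 0 ≤ x i) :
    (Fintype.card ι : ℝ) * (∏ i, x i) ^ ((Fintype.card ι : ℝ)⁻¹) ≤ ∑ i, x i := by
  rcases isEmpty_or_nonempty ι with h|h
  · simp
  set c : ℝ := (Fintype.card ι : ℝ) with hc
  have hcpos : (0:ℝ) < c := by simp [hc, Fintype.card_pos]
  have hw : ∑ _i : ι, c⁻¹ = 1 := by
    rw [Finset.sum_const, Finset.card_univ, nsmul_eq_mul]; exact mul_inv_cancel₀ hcpos.ne'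
  have g := Real.geom_mean_le_arith_mean_weighted Finset.univ (fun _ => c⁻¹) x
    (fun i _ => by positivity) hw (fun i _ => hx i)
  rw [Real.finset_prod_rpow _ _ (fun i _ => hx i)] at g
  rw [← Finset.mul_sum] at g
  calc c * (∏ i, x i) ^ c⁻¹ ≤ c * (c⁻¹ * ∑ i, x i) :=
        mul_le_mul_of_nonneg_left g hcpos.le
    _ = ∑ i, x i := by field_simp

def blockEquiv (n k : ℕ) : (Fin k ⊕ (Fin n × Fin k)) ≃ (Fin (n+1) × Fin k) where
  toFun x := Sum.elim (fun l => ((0 : Fin (n+1)), l)) (fun p => (p.1.succ, p.2)) x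
  invFun p := Fin.cases (Sum.inl p.2) (fun j => Sum.inr (j, p.2)) p.1
  left_inv := by rintro (l | ⟨i, l⟩) <;> simp
  right_inv := by
    rintro ⟨i, l⟩
    refine Fin.cases ?_ ?_ i <;> simp

lemma fischer {k : ℕ} : ∀ {n : ℕ} (H : Matrix (Fin n × Fin k) (Fin n × Fin k) ℂ),
    H.PosSemidef →
    H.det.re ≤ ∏ i : Fin n, (Matrix.of fun l m : Fin k => H (i, l) (i, m)).det.re := by
  intro n
  induction n with
  | zero => intro H hH; simp [Matrix.det_isEmpty]
  | succ n ih =>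
    intro H hH
    set e := blockEquiv n k
    set A : Matrix (Fin k) (Fin k) ℂ :=
      Matrix.of (fun l m => H ((0 : Fin (n+1)), l) ((0 : Fin (n+1)), m)) with hAdef
    set B : Matrix (Fin k) (Fin n × Fin k) ℂ :=
      Matrix.of (fun l p => H ((0 : Fin (n+1)), l) (p.1.succ, p.2)) with hBdef
    set D : Matrix (Fin n × Fin k) (Fin n × Fin k) ℂ :=
      Matrix.of (fun p q => H (p.1.succ, p.2) (q.1.succ, q.2)) with hDdef
    have hA : A.PosSemidef := hH.submatrix (fun l => ((0 : Fin (n+1)), l))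
    have hD : D.PosSemidef := hH.submatrix (fun p : Fin n × Fin k => (p.1.succ, p.2))
    have hsub : H.submatrix e e = Matrix.fromBlocks A B Bᴴ D := by
      ext x y
      rcases x with l | p <;> rcases y with m | q
      · rfl
      · rfl
      · exact (hH.1.apply _ _).symm
      · rfl
    have hdet : H.det = (Matrix.fromBlocks A B Bᴴ D).det := by
      rw [← hsub, Matrix.det_submatrix_equiv_self]
    have hPSD' : (Matrix.fromBlocks A B Bᴴ D).PosSemidef := by
      rw [← hsub]
      exact (Matrix.posSemidef_submatrix_equiv e).2 hH
    have hAnonneg := psd_det_re_nonneg hA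
    have hDfact : ∀ i : Fin n,
        (Matrix.of fun l m : Fin k => D ((i, l)) ((i, m))) =
          (Matrix.of fun l m : Fin k => H ((i.succ, l)) ((i.succ, m))) := fun i => rfl
    have hprod : ∏ i : Fin (n+1), (Matrix.of fun l m : Fin k => H ((i, l)) ((i, m))).det.re
        = A.det.re * ∏ i : Fin n,
            (Matrix.of fun l m : Fin k => D ((i, l)) ((i, m))).det.re := by
      rw [Fin.prod_univ_succ]
      rfl
    by_cases hdA : A.det = 0
    · -- det H = 0
      obtain ⟨v, hv0, hv⟩ := (Matrix.exists_mulVec_eq_zero_iff).2 hdA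
      set x : Fin (n+1) × Fin k → ℂ := fun p => if p.1 = 0 then v p.2 else 0 with hxdef
      have hx0 : x ≠ 0 := by
        intro h
        apply hv0
        ext l
        have := congrFun h ((0 : Fin (n+1)), l)
        simpa [hxdef] using this
      have hdot : star x ⬝ᵥ H *ᵥ x = star v ⬝ᵥ A *ᵥ v := by
        simp only [dotProduct, Matrix.mulVec, hxdef, Pi.star_apply]
        rw [Fintype.sum_prod_type]
        rw [Fin.sum_univ_succ]
        simp [Fintype.sum_prod_type, Fin.sum_univ_succ, dotProduct, hAdef,
          Finset.mul_sum, mul_comm, Fin.succ_ne_zero]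
      have hHx : H *ᵥ x = 0 := by
        rw [← hH.dotProduct_mulVec_zero_iff]
        rw [hdot, hv, dotProduct_zero]
      have hdetH : H.det = 0 := (Matrix.exists_mulVec_eq_zero_iff).1 ⟨x, hx0, hHx⟩
      rw [hdetH]
      simp only [Complex.zero_re]
      refine Finset.prod_nonneg fun i _ => psd_det_re_nonneg (hH.submatrix (fun l => (i, l)))
    · haveI : Invertible A := A.invertibleOfIsUnitDet (Ne.isUnit hdA)
      have hApd : A.PosDef := psd_posdef_of_det_ne hA hdA
      have hSchur : (D - Bᴴ * A⁻¹ * B).PosSemidef :=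
        (Matrix.PosDef.fromBlocks₁₁ B D hApd).1 hPSD'
      have hX : (Bᴴ * A⁻¹ * B).PosSemidef := hApd.posSemidef.inv.conjTranspose_mul_mul_same B
      have hdetblock : H.det = A.det * (D - Bᴴ * A⁻¹ * B).det := by
        rw [hdet, Matrix.det_fromBlocks₁₁, Matrix.invOf_eq_nonsing_inv]
      have hmono : (D - Bᴴ * A⁻¹ * B).det.re ≤ D.det.re := by
        have := det_re_add_psd_le hSchur hX
        rwa [sub_add_cancel] at this
      have hre : H.det.re = A.det.re * (D - Bᴴ * A⁻¹ * B).det.re := by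
        rw [hdetblock]
        conv_lhs => rw [psd_det_eq hA, psd_det_eq hSchur]
        rw [← Complex.ofReal_mul, Complex.ofReal_re]
      rw [hre, hprod]
      have hIH := ih D hD
      have hSnn := psd_det_re_nonneg hSchur
      have hDnn := psd_det_re_nonneg hD
      calc A.det.re * (D - Bᴴ * A⁻¹ * B).det.re ≤ A.det.re * D.det.re :=
            mul_le_mul_of_nonneg_left hmono hAnonneg
        _ ≤ A.det.re * ∏ i : Fin n,
              (Matrix.of fun l m : Fin k => D ((i, l)) ((i, m))).det.re :=
            mul_le_mul_of_nonneg_left hIH hAnonneg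

/-- If `H ∈ M_n(M_k)` is positive semidefinite, then
`(det(tr₁ H) / n^k)^n ≥ det H`, where `tr₁ H = Σ_{i=1}^n H_{ii} ∈ M_k` is
the first partial trace. -/
theorem fiedler_markham_first_partial_trace {n k : ℕ} (hn : 0 < n) (hk : 0 < k)
    (H : Matrix (Fin n × Fin k) (Fin n × Fin k) ℂ) (hH : H.PosSemidef) :
    ((Matrix.det (∑ i : Fin n,
        Matrix.of fun l m : Fin k => H (i, l) (i, m))).re
      / (n : ℝ) ^ k) ^ n ≥ H.det.re := by
  classical
  haveI : Nonempty (Fin k) := ⟨⟨0, hk⟩⟩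
  set f : Fin n → Matrix (Fin k) (Fin k) ℂ :=
    fun i => Matrix.of fun l m : Fin k => H (i, l) (i, m) with hf
  have hfpsd : ∀ i, (f i).PosSemidef := fun i => hH.submatrix (fun l => (i, l))
  have hS : (∑ i, f i).PosSemidef := psd_sum _ _ (fun i _ => hfpsd i)
  set d : ℝ := (∑ i, f i).det.re with hd
  have hd0 : 0 ≤ d := psd_det_re_nonneg hS
  set a : Fin n → ℝ := fun i => (f i).det.re with ha
  have ha0 : ∀ i, 0 ≤ a i := fun i => psd_det_re_nonneg (hfpsd i)
  have hfisch : H.det.re ≤ ∏ i, a i := fischer H hH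
  set p : ℝ := ∏ i, a i with hp
  have hp0 : 0 ≤ p := Finset.prod_nonneg fun i _ => ha0 i
  have hmink : ∑ i, (a i) ^ ((k:ℝ)⁻¹) ≤ d ^ ((k:ℝ)⁻¹) := by
    have h := minkowski_sum Finset.univ f (fun i _ => hfpsd i)
    simpa using h
  have hprodr : ∏ i, (a i) ^ ((k:ℝ)⁻¹) = p ^ ((k:ℝ)⁻¹) :=
    Real.finset_prod_rpow _ _ (fun i _ => ha0 i) _
  have hamgm := amgm_sum (fun i => (a i) ^ ((k:ℝ)⁻¹)) (fun i => by
    have := ha0 i; positivity)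
  rw [hprodr] at hamgm
  simp only [Fintype.card_fin] at hamgm
  have hcomb : (n:ℝ) * (p ^ ((k:ℝ)⁻¹)) ^ ((n:ℝ)⁻¹) ≤ d ^ ((k:ℝ)⁻¹) :=
    le_trans hamgm hmink
  have hL0 : 0 ≤ (n:ℝ) * (p ^ ((k:ℝ)⁻¹)) ^ ((n:ℝ)⁻¹) := by positivity
  have hpow := pow_le_pow_left₀ hL0 hcomb (n * k)
  have hRHS : (d ^ ((k:ℝ)⁻¹)) ^ (n * k) = d ^ n := by
    rw [← Real.rpow_natCast (d ^ ((k:ℝ)⁻¹)) (n * k), ← Real.rpow_mul hd0,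
      ← Real.rpow_natCast d n]
    congr 1
    push_cast
    field_simp
  have hLHS : ((n:ℝ) * (p ^ ((k:ℝ)⁻¹)) ^ ((n:ℝ)⁻¹)) ^ (n * k)
      = (n:ℝ) ^ (n * k) * p := by
    rw [mul_pow]
    congr 1
    rw [← Real.rpow_natCast ((p ^ ((k:ℝ)⁻¹)) ^ ((n:ℝ)⁻¹)) (n * k),
      ← Real.rpow_mul (by positivity), ← Real.rpow_mul hp0]
    rw [show (k:ℝ)⁻¹ * ((n:ℝ)⁻¹ * ((n * k : ℕ) : ℝ)) = 1 by
      push_cast; field_simp]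
    exact Real.rpow_one p
  rw [hRHS, hLHS] at hpow
  have hnk : (0:ℝ) < (n:ℝ) ^ (n * k) := by positivity
  rw [ge_iff_le, div_pow, ← pow_mul]
  rw [le_div_iff₀ (by positivity)]
  calc H.det.re * (n:ℝ) ^ (k * n) ≤ p * (n:ℝ) ^ (k * n) :=
        mul_le_mul_of_nonneg_right hfisch (by positivity)
    _ = (n:ℝ) ^ (n * k) * p := by rw [mul_comm k n]; ring
    _ ≤ d ^ n := hpow
end

section
/- Let A, B, C be positive semidefinite complex matrices of the same size and r a positive integer. Then ⊗^r(A+B+C) + ⊗^r C ≥ ⊗^r(A+C) + ⊗^r(B+C) in the Loewner order. -/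
open Kronecker ComplexOrder

/-- `tpIdx I r` is the index type of the `(r+1)`-fold Kronecker tensor power of
a matrix indexed by `I`. -/
def tpIdx (I : Type) : ℕ → Type
  | 0 => I
  | r + 1 => tpIdx I r × I

instance tpIdx.fintype (I : Type) [Fintype I] : ∀ r : ℕ, Fintype (tpIdx I r)
  | 0 => ‹Fintype I›
  | r + 1 => letI := tpIdx.fintype I r; inferInstanceAs (Fintype (tpIdx I r × I))

/-- `tensorPow X r` is the `(r+1)`-fold Kronecker tensor power `⊗^{r+1} X`:
`tensorPow X 0 = ⊗¹X = X` and `tensorPow X (m+1) = ⊗^{m+2}X = (⊗^{m+1}X) ⊗ X`.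
Thus as `r` ranges over `ℕ`, `tensorPow X r` ranges over all tensor powers
`⊗^r X` with `r` a positive integer. -/
noncomputable def tensorPow {I : Type} (X : Matrix I I ℂ) :
    (r : ℕ) → Matrix (tpIdx I r) (tpIdx I r) ℂ
  | 0 => X
  | r + 1 => (tensorPow X r) ⊗ₖ X

open Matrix in
lemma kron_conjTranspose {m n : Type} (A : Matrix m m ℂ) (B : Matrix n n ℂ) :
    (A ⊗ₖ B)ᴴ = Aᴴ ⊗ₖ Bᴴ := by
  ext ⟨i, k⟩ ⟨j, l⟩
  simp [Matrix.conjTranspose_apply]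

lemma psd_kron {m n : Type} [Fintype m] [Fintype n]
    {A : Matrix m m ℂ} {B : Matrix n n ℂ}
    (hA : A.PosSemidef) (hB : B.PosSemidef) : (A ⊗ₖ B).PosSemidef := by
  classical
  exact hA.kronecker hB

lemma tensorPow_posSemidef {N : ℕ} {X : Matrix (Fin N) (Fin N) ℂ}
    (hX : X.PosSemidef) : ∀ r : ℕ, (tensorPow X r).PosSemidef
  | 0 => hX
  | r + 1 => psd_kron (tensorPow_posSemidef hX r) hX

lemma tensorPow_mono {N : ℕ} {X Y : Matrix (Fin N) (Fin N) ℂ}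
    (hX : X.PosSemidef) (hY : Y.PosSemidef) (hXY : (X - Y).PosSemidef) :
    ∀ r : ℕ, (tensorPow X r - tensorPow Y r).PosSemidef
  | 0 => hXY
  | r + 1 => by
    have key : tensorPow X (r + 1) - tensorPow Y (r + 1) =
        (tensorPow X r - tensorPow Y r) ⊗ₖ X + (tensorPow Y r) ⊗ₖ (X - Y) := by
      show tensorPow X r ⊗ₖ X - tensorPow Y r ⊗ₖ Y = _
      ext ⟨i, k⟩ ⟨j, l⟩
      simp [Matrix.sub_apply, Matrix.add_apply]
      ring
    rw [key]
    exact (psd_kron (tensorPow_mono hX hY hXY r) hX).add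
      (psd_kron (tensorPow_posSemidef hY r) hXY)

/-- For positive semidefinite `A, B, C` of the same size and every positive
integer `r`, `⊗^r(A+B+C) + ⊗^r C ≥ ⊗^r(A+C) + ⊗^r(B+C)` in the Loewner
order. -/
theorem tensorPow_tie_inequality {N : ℕ}
    (A B C : Matrix (Fin N) (Fin N) ℂ)
    (hA : A.PosSemidef) (hB : B.PosSemidef) (hC : C.PosSemidef) (r : ℕ) :
    (tensorPow (A + B + C) r + tensorPow C r
      - (tensorPow (A + C) r + tensorPow (B + C) r)).PosSemidef := by
  induction r with
  | zero =>
    have : tensorPow (A + B + C) 0 + tensorPow C 0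
        - (tensorPow (A + C) 0 + tensorPow (B + C) 0) = 0 := by
      show (A + B + C) + C - ((A + C) + (B + C)) = 0
      abel
    rw [this]
    exact Matrix.PosSemidef.zero
  | succ r ih =>
    have hPQ : (tensorPow (A + B + C) r - tensorPow (A + C) r).PosSemidef := by
      refine tensorPow_mono ((hA.add hB).add hC) (hA.add hC) ?_ r
      have : A + B + C - (A + C) = B := by abel
      rw [this]; exact hB
    have hPR : (tensorPow (A + B + C) r - tensorPow (B + C) r).PosSemidef := by
      refine tensorPow_mono ((hA.add hB).add hC) (hB.add hC) ?_ r
      have : A + B + C - (B + C) = A := by abel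
      rw [this]; exact hA
    have key : tensorPow (A + B + C) (r + 1) + tensorPow C (r + 1)
        - (tensorPow (A + C) (r + 1) + tensorPow (B + C) (r + 1)) =
        (tensorPow (A + B + C) r - tensorPow (A + C) r) ⊗ₖ A
        + (tensorPow (A + B + C) r - tensorPow (B + C) r) ⊗ₖ B
        + (tensorPow (A + B + C) r + tensorPow C r
            - (tensorPow (A + C) r + tensorPow (B + C) r)) ⊗ₖ C := by
      show tensorPow (A + B + C) r ⊗ₖ (A + B + C) + tensorPow C r ⊗ₖ C
        - (tensorPow (A + C) r ⊗ₖ (A + C) + tensorPow (B + C) r ⊗ₖ (B + C)) = _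
      ext ⟨i, k⟩ ⟨j, l⟩
      simp [Matrix.sub_apply, Matrix.add_apply]
      ring
    rw [key]
    exact ((psd_kron hPQ hA).add (psd_kron hPR hB)).add (psd_kron ih hC)
end
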